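/- Let μ̂_k = π_k · exp(η_k Q^{π_k}) / z_k be the tilted guider (pointwise in state s over the finite joint action space), and let π_{k+1}(·|s) be any distribution with KL(π_{k+1}(·|s) ‖ μ̂_k(·|s)) ≤ KL(π_k(·|s) ‖ μ̂_k(·|s)) for every state s. Then for every s: E_{a∼π_{k+1}(·|s)}[Q^{π_k}(s,a)] − E_{a∼π_k(·|s)}[Q^{π_k}(s,a)] ≥ (1/η_k)·KL(π_{k+1}(·|s) ‖ π_k(·|s)) ≥ 0, and consequently (by the performance difference lemma) V_ρ(π_{k+1}) ≥ V_ρ(π_k) for every initial distribution ρ in the finite discounted MDP. -/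

import Mathlib

open Finset

section MDP

variable {S A : Type*} [Fintype S] [Fintype A] [DecidableEq S]

/-- Kullback–Leibler divergence on a finite set. -/
noncomputable def KL {X : Type*} [Fintype X] (p q : X → ℝ) : ℝ :=
  ∑ x, p x * Real.log (p x / q x)

/-- The state-transition matrix induced by a policy. -/
noncomputable def policyMatrix (P : S → A → S → ℝ) (π : S → A → ℝ) : Matrix S S ℝ :=
  fun s s' => ∑ a, π s a * P s a s'

/-- Expected one-step reward under policy `π`. -/
noncomputable def rewardVec (r : S → A → ℝ) (π : S → A → ℝ) : S → ℝ :=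
  fun s => ∑ a, π s a * r s a

/-- The state value function `V^π`. -/
noncomputable def Vval (γ : ℝ) (P : S → A → S → ℝ) (r : S → A → ℝ) (π : S → A → ℝ) :
    S → ℝ :=
  fun s => ∑' t : ℕ, γ ^ t * ((policyMatrix P π ^ t).mulVec (rewardVec r π)) s

/-- The state-action value function `Q^π`. -/
noncomputable def Qval (γ : ℝ) (P : S → A → S → ℝ) (r : S → A → ℝ) (π : S → A → ℝ) :
    S → A → ℝ :=
  fun s a => r s a + γ * ∑ s', P s a s' * Vval γ P r π s'

/-- `P` is a transition kernel. -/
def IsKernel (P : S → A → S → ℝ) : Prop :=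
  ∀ s a, (∀ s', 0 ≤ P s a s') ∧ ∑ s', P s a s' = 1

/-- `π` is a stationary policy. -/
def IsPolicy (π : S → A → ℝ) : Prop :=
  ∀ s, (∀ a, 0 ≤ π s a) ∧ ∑ a, π s a = 1

end MDP

section Aux

variable {S A : Type*} [Fintype S] [Fintype A] [DecidableEq S]

lemma KL_self {X : Type*} [Fintype X] (p : X → ℝ) : KL p p = 0 := by
  unfold KL
  apply Finset.sum_eq_zero
  intro x _
  rcases eq_or_ne (p x) 0 with h | h
  · simp [h]
  · simp [div_self h]

lemma gibbs {X : Type*} [Fintype X] (p q : X → ℝ) (hp : ∀ x, 0 ≤ p x)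
    (hq : ∀ x, 0 < q x) (hp1 : ∑ x, p x = 1) (hq1 : ∑ x, q x ≤ 1) : 0 ≤ KL p q := by
  have key : ∀ x, p x - q x ≤ p x * Real.log (p x / q x) := by
    intro x
    rcases eq_or_lt_of_le (hp x) with h | h
    · simp [← h]
      linarith [(hq x).le]
    · have hpq : 0 < q x / p x := div_pos (hq x) h
      have := Real.log_le_sub_one_of_pos hpq
      have hlog : Real.log (p x / q x) = - Real.log (q x / p x) := by
        rw [← Real.log_inv]
        congr 1
        field_simp
      rw [hlog]
      have h2 : p x * (q x / p x - 1) = q x - p x := by field_simp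
      nlinarith [this, h.le]
  have : ∑ x, (p x - q x) ≤ ∑ x, p x * Real.log (p x / q x) :=
    Finset.sum_le_sum fun x _ => key x
  rw [Finset.sum_sub_distrib, hp1] at this
  unfold KL
  linarith

variable (γ : ℝ) (P : S → A → S → ℝ) (r : S → A → ℝ) (π : S → A → ℝ)

lemma pm_nonneg (hP : IsKernel P) (hπ : IsPolicy π) (t : ℕ) :
    (∀ s s', 0 ≤ (policyMatrix P π ^ t) s s') ∧
      (∀ s, ∑ s', (policyMatrix P π ^ t) s s' = 1) := by
  induction t with
  | zero =>
    constructor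
    · intro s s'
      simp [Matrix.one_apply]
      split <;> norm_num
    · intro s
      simp [Matrix.one_apply]
  | succ n ih =>
    have base_nn : ∀ s s', 0 ≤ policyMatrix P π s s' := by
      intro s s'
      exact Finset.sum_nonneg fun a _ => mul_nonneg ((hπ s).1 a) ((hP s a).1 s')
    have base_row : ∀ s, ∑ s', policyMatrix P π s s' = 1 := by
      intro s
      unfold policyMatrix
      rw [Finset.sum_comm]
      calc ∑ a, ∑ s', π s a * P s a s' = ∑ a, π s a * ∑ s', P s a s' := by
            simp [Finset.mul_sum]
        _ = 1 := by
            simp only [fun a => (hP s a).2, mul_one]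
            exact (hπ s).2
    constructor
    · intro s s'
      rw [pow_succ]
      exact Finset.sum_nonneg fun u _ => mul_nonneg (ih.1 s u) (base_nn u s')
    · intro s
      rw [pow_succ]
      simp only [Matrix.mul_apply]
      rw [Finset.sum_comm]
      calc ∑ u, ∑ s', (policyMatrix P π ^ n) s u * policyMatrix P π u s'
          = ∑ u, (policyMatrix P π ^ n) s u * ∑ s', policyMatrix P π u s' := by
            simp [Finset.mul_sum]
        _ = 1 := by
            simp only [base_row, mul_one]
            exact ih.2 s

lemma summable_V (hP : IsKernel P) (hπ : IsPolicy π) (hγ : 0 ≤ γ ∧ γ < 1) (v : S → ℝ) (s : S) :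
    Summable (fun t : ℕ => γ ^ t * ((policyMatrix P π ^ t).mulVec v) s) := by
  set B : ℝ := ∑ s', |v s'| with hB
  have hbd : ∀ t : ℕ, ‖γ ^ t * ((policyMatrix P π ^ t).mulVec v) s‖ ≤ B * γ ^ t := by
    intro t
    have h1 : |((policyMatrix P π ^ t).mulVec v) s| ≤ B := by
      have : ((policyMatrix P π ^ t).mulVec v) s = ∑ s', (policyMatrix P π ^ t) s s' * v s' := by
        simp [Matrix.mulVec, dotProduct]
      rw [this]
      calc |∑ s', (policyMatrix P π ^ t) s s' * v s'|
          ≤ ∑ s', |(policyMatrix P π ^ t) s s' * v s'| := Finset.abs_sum_le_sum_abs _ _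
        _ ≤ ∑ s', |v s'| := by
            apply Finset.sum_le_sum
            intro s' _
            rw [abs_mul, abs_of_nonneg ((pm_nonneg P π hP hπ t).1 s s')]
            have h2 := (pm_nonneg P π hP hπ t).1 s s'
            have h3 : (policyMatrix P π ^ t) s s' ≤ 1 := by
              have := (pm_nonneg P π hP hπ t).2 s
              calc (policyMatrix P π ^ t) s s'
                  ≤ ∑ u, (policyMatrix P π ^ t) s u :=
                    Finset.single_le_sum (fun u _ => (pm_nonneg P π hP hπ t).1 s u) (mem_univ s')
                _ = 1 := this
            nlinarith [abs_nonneg (v s')]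
    rw [Real.norm_eq_abs, abs_mul, abs_pow, abs_of_nonneg hγ.1]
    calc γ ^ t * |((policyMatrix P π ^ t).mulVec v) s|
        ≤ γ ^ t * B := by
          apply mul_le_mul_of_nonneg_left h1 (pow_nonneg hγ.1 t)
      _ = B * γ ^ t := mul_comm _ _
  exact Summable.of_norm_bounded ((summable_geometric_of_lt_one hγ.1 hγ.2).mul_left B) hbd

lemma bellman (hP : IsKernel P) (hπ : IsPolicy π) (hγ : 0 ≤ γ ∧ γ < 1) (s : S) :
    Vval γ P r π s =
      rewardVec r π s + γ * ((policyMatrix P π).mulVec (Vval γ P r π)) s := by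
  set M := policyMatrix P π with hM
  set R := rewardVec r π with hR
  have hs : Summable (fun t : ℕ => γ ^ t * ((M ^ t).mulVec R) s) :=
    summable_V γ P π hP hπ hγ R s
  have h0 : Vval γ P r π s = ∑' t : ℕ, γ ^ t * ((M ^ t).mulVec R) s := rfl
  rw [h0, Summable.tsum_eq_zero_add hs]
  congr 1
  · simp [Matrix.one_mulVec]
  · have hterm : ∀ t : ℕ, γ ^ (t + 1) * ((M ^ (t + 1)).mulVec R) s =
        ∑ s', (γ * M s s') * (γ ^ t * ((M ^ t).mulVec R) s') := by
      intro t
      have h1 : (M ^ (t + 1)).mulVec R = M.mulVec ((M ^ t).mulVec R) := by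
        rw [Matrix.mulVec_mulVec, ← pow_succ']
      rw [h1]
      have h2 : M.mulVec ((M ^ t).mulVec R) s = ∑ s', M s s' * ((M ^ t).mulVec R) s' := by
        simp [Matrix.mulVec, dotProduct]
      rw [h2, pow_succ, Finset.mul_sum]
      apply Finset.sum_congr rfl
      intro s' _
      ring
    calc (∑' t : ℕ, γ ^ (t + 1) * ((M ^ (t + 1)).mulVec R) s)
        = ∑' t : ℕ, ∑ s', (γ * M s s') * (γ ^ t * ((M ^ t).mulVec R) s') := by
          exact tsum_congr hterm
      _ = ∑ s', ∑' t : ℕ, (γ * M s s') * (γ ^ t * ((M ^ t).mulVec R) s') := by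
          apply Summable.tsum_finsetSum
          intro s' _
          exact (summable_V γ P π hP hπ hγ R s').mul_left _
      _ = ∑ s', (γ * M s s') * Vval γ P r π s' := by
          apply Finset.sum_congr rfl
          intro s' _
          rw [tsum_mul_left]
          rfl
      _ = γ * (M.mulVec (Vval γ P r π)) s := by
          simp [Matrix.mulVec, dotProduct, Finset.mul_sum, mul_assoc]

lemma sum_pi_Q (π' : S → A → ℝ) (s : S) :
    ∑ a, π' s a * Qval γ P r π s a =
      rewardVec r π' s + γ * ((policyMatrix P π').mulVec (Vval γ P r π)) s := by
  have hRHS : γ * ((policyMatrix P π').mulVec (Vval γ P r π)) s =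
      ∑ s', ∑ a, γ * (π' s a * P s a s' * Vval γ P r π s') := by
    simp only [Matrix.mulVec, dotProduct, policyMatrix]
    rw [Finset.mul_sum]
    apply Finset.sum_congr rfl
    intro s' _
    rw [Finset.sum_mul, Finset.mul_sum]
  calc ∑ a, π' s a * Qval γ P r π s a
      = ∑ a, (π' s a * r s a + ∑ s', γ * (π' s a * P s a s' * Vval γ P r π s')) := by
        apply Finset.sum_congr rfl
        intro a _
        unfold Qval
        rw [mul_add, Finset.mul_sum, Finset.mul_sum]
        congr 1
        apply Finset.sum_congr rfl
        intro s' _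
        ring
    _ = rewardVec r π' s + ∑ a, ∑ s', γ * (π' s a * P s a s' * Vval γ P r π s') := by
        rw [Finset.sum_add_distrib]
        rfl
    _ = rewardVec r π' s + γ * ((policyMatrix P π').mulVec (Vval γ P r π)) s := by
        rw [hRHS, Finset.sum_comm]

end Aux

/-- Complete monotonic-improvement theorem of MAGPO: if `μ̂_k(·|s) ∝ π_k(·|s)
exp(η_k Q^{π_k}(s,·))` is the per-state tilted guider and the learner update does not
increase the KL divergence to it, i.e.
`KL(π_{k+1}(·|s) ‖ μ̂_k(·|s)) ≤ KL(π_k(·|s) ‖ μ̂_k(·|s))` for every state `s`, then at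
every state the expected `Q^{π_k}` improvement is at least
`(1/η_k) KL(π_{k+1}(·|s) ‖ π_k(·|s)) ≥ 0`, and consequently (by the performance
difference lemma) `V_ρ(π_{k+1}) ≥ V_ρ(π_k)` for every initial distribution `ρ`. -/
theorem magpo_monotonic_improvement
    {S A : Type*} [Fintype S] [Fintype A] [DecidableEq S]
    (γ : ℝ) (hγ : 0 ≤ γ ∧ γ < 1)
    (P : S → A → S → ℝ) (hP : IsKernel P)
    (r : S → A → ℝ)
    (πk πk1 : S → A → ℝ) (hπk : IsPolicy πk) (hπk1 : IsPolicy πk1)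
    (hπkfull : ∀ s a, 0 < πk s a)
    (η : ℝ) (hη : 0 < η)
    (z : S → ℝ)
    (hz : ∀ s, z s = ∑ a, πk s a * Real.exp (η * Qval γ P r πk s a))
    (μhat : S → A → ℝ)
    (hμ : ∀ s a, μhat s a = πk s a * Real.exp (η * Qval γ P r πk s a) / z s)
    (hKL : ∀ s, KL (πk1 s) (μhat s) ≤ KL (πk s) (μhat s)) :
    (∀ s,
      (1 / η) * KL (πk1 s) (πk s) ≤
        (∑ a, πk1 s a * Qval γ P r πk s a) - (∑ a, πk s a * Qval γ P r πk s a) ∧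
      0 ≤ (1 / η) * KL (πk1 s) (πk s)) ∧
    (∀ ρ : S → ℝ, (∀ s, 0 ≤ ρ s) → (∑ s, ρ s = 1) →
      (∑ s, ρ s * Vval γ P r πk s) ≤ ∑ s, ρ s * Vval γ P r πk1 s) := by
  obtain ⟨hγ0, hγ1⟩ := hγ
  -- per-state positivity of the normalizer
  have hzpos : ∀ s : S, 0 < z s := by
    intro s
    have hA : (Finset.univ : Finset A).Nonempty := by
      by_contra h
      rw [Finset.not_nonempty_iff_eq_empty] at h
      have h2 := (hπk s).2
      rw [h] at h2
      simp at h2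
    rw [hz s]
    exact Finset.sum_pos (fun a _ => mul_pos (hπkfull s a) (Real.exp_pos _)) hA
  -- KL expansion against the tilted guider
  have expand : ∀ (s : S) (p : A → ℝ), (∀ a, 0 ≤ p a) → (∑ a, p a = 1) →
      KL p (μhat s) =
        KL p (πk s) - η * (∑ a, p a * Qval γ P r πk s a) + Real.log (z s) := by
    intro s p hp hp1
    have hterm : ∀ a, p a * Real.log (p a / μhat s a) =
        p a * Real.log (p a / πk s a) - η * (p a * Qval γ P r πk s a)
          + p a * Real.log (z s) := by
      intro a
      rcases eq_or_lt_of_le (hp a) with h | h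
      · simp [← h]
      · have hμpos : 0 < μhat s a := by
          rw [hμ s a]
          exact div_pos (mul_pos (hπkfull s a) (Real.exp_pos _)) (hzpos s)
        have hπe : πk s a * Real.exp (η * Qval γ P r πk s a) ≠ 0 :=
          ne_of_gt (mul_pos (hπkfull s a) (Real.exp_pos _))
        have hlog : Real.log (μhat s a) =
            Real.log (πk s a) + η * Qval γ P r πk s a - Real.log (z s) := by
          rw [hμ s a, Real.log_div hπe (ne_of_gt (hzpos s)),
            Real.log_mul (ne_of_gt (hπkfull s a)) (Real.exp_ne_zero _), Real.log_exp]
        rw [Real.log_div (ne_of_gt h) (ne_of_gt hμpos),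
          Real.log_div (ne_of_gt h) (ne_of_gt (hπkfull s a)), hlog]
        ring
    unfold KL
    rw [Finset.sum_congr rfl fun a _ => hterm a, Finset.sum_add_distrib,
      Finset.sum_sub_distrib, ← Finset.mul_sum, ← Finset.sum_mul, hp1, one_mul]
  -- the per-state improvement bound
  have key1 : ∀ s, KL (πk1 s) (πk s) ≤
      η * ((∑ a, πk1 s a * Qval γ P r πk s a) - (∑ a, πk s a * Qval γ P r πk s a)) := by
    intro s
    have h := hKL s
    rw [expand s (πk1 s) (hπk1 s).1 (hπk1 s).2,
      expand s (πk s) (hπk s).1 (hπk s).2, KL_self] at h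
    rw [mul_sub]
    linarith
  have key0 : ∀ s, 0 ≤ KL (πk1 s) (πk s) := fun s =>
    gibbs (πk1 s) (πk s) (hπk1 s).1 (hπkfull s) (hπk1 s).2 (le_of_eq (hπk s).2)
  have part1 : ∀ s,
      (1 / η) * KL (πk1 s) (πk s) ≤
        (∑ a, πk1 s a * Qval γ P r πk s a) - (∑ a, πk s a * Qval γ P r πk s a) ∧
      0 ≤ (1 / η) * KL (πk1 s) (πk s) := by
    intro s
    constructor
    · calc (1 / η) * KL (πk1 s) (πk s)
          ≤ (1 / η) * (η * ((∑ a, πk1 s a * Qval γ P r πk s a)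
              - (∑ a, πk s a * Qval γ P r πk s a))) :=
            mul_le_mul_of_nonneg_left (key1 s) (by positivity)
        _ = (∑ a, πk1 s a * Qval γ P r πk s a)
              - (∑ a, πk s a * Qval γ P r πk s a) := by
            field_simp
    · exact mul_nonneg (by positivity) (key0 s)
  refine ⟨part1, ?_⟩
  intro ρ hρ hρ1
  rcases isEmpty_or_nonempty S with hS | hS
  · simp [Finset.univ_eq_empty]
  have hEle : ∀ s, (∑ a, πk s a * Qval γ P r πk s a)
      ≤ ∑ a, πk1 s a * Qval γ P r πk s a := by
    intro s
    nlinarith [key0 s, key1 s]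
  -- monotone improvement of the value function at every state
  have hΔ : ∀ s, Vval γ P r πk s ≤ Vval γ P r πk1 s := by
    set M := policyMatrix P πk1 with hMdef
    set Δ : S → ℝ := fun s => Vval γ P r πk1 s - Vval γ P r πk s with hΔdef
    have Mnn : ∀ s s', 0 ≤ M s s' := by
      intro s s'
      exact Finset.sum_nonneg fun a _ => mul_nonneg ((hπk1 s).1 a) ((hP s a).1 s')
    have Mrow : ∀ s, ∑ s', M s s' = 1 := by
      intro s
      have := (pm_nonneg P πk1 hP hπk1 1).2 s
      simpa [pow_one] using this
    have improve : ∀ s, Vval γ P r πk s ≤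
        rewardVec r πk1 s + γ * (M.mulVec (Vval γ P r πk)) s := by
      intro s
      have e0 : Vval γ P r πk s = ∑ a, πk s a * Qval γ P r πk s a :=
        ((sum_pi_Q γ P r πk πk s).trans (bellman γ P r πk hP hπk ⟨hγ0, hγ1⟩ s).symm).symm
      have e1 := sum_pi_Q γ P r πk πk1 s
      rw [e0, ← e1]
      exact hEle s
    have bell1 : ∀ s, Vval γ P r πk1 s =
        rewardVec r πk1 s + γ * (M.mulVec (Vval γ P r πk1)) s :=
      bellman γ P r πk1 hP hπk1 ⟨hγ0, hγ1⟩
    obtain ⟨s₀, -, hmin⟩ := Finset.exists_min_image Finset.univ Δ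
      ⟨Classical.arbitrary S, Finset.mem_univ _⟩
    have hsub : (M.mulVec (Vval γ P r πk1)) s₀ - (M.mulVec (Vval γ P r πk)) s₀
        = (M.mulVec Δ) s₀ := by
      simp only [Matrix.mulVec, dotProduct, hΔdef]
      rw [← Finset.sum_sub_distrib]
      apply Finset.sum_congr rfl
      intro s' _
      ring
    have hge : Δ s₀ ≤ (M.mulVec Δ) s₀ := by
      have : (M.mulVec Δ) s₀ = ∑ s', M s₀ s' * Δ s' := by
        simp [Matrix.mulVec, dotProduct]
      rw [this]
      calc Δ s₀ = ∑ s', M s₀ s' * Δ s₀ := by rw [← Finset.sum_mul, Mrow, one_mul]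
        _ ≤ ∑ s', M s₀ s' * Δ s' :=
            Finset.sum_le_sum fun s' _ =>
              mul_le_mul_of_nonneg_left (hmin s' (Finset.mem_univ _)) (Mnn s₀ s')
    have hstep : γ * (M.mulVec Δ) s₀ ≤ Δ s₀ := by
      have h1 := improve s₀
      have h2 := bell1 s₀
      have : Δ s₀ = Vval γ P r πk1 s₀ - Vval γ P r πk s₀ := rfl
      rw [this, h2]
      have h3 : γ * (M.mulVec Δ) s₀
          = γ * (M.mulVec (Vval γ P r πk1)) s₀ - γ * (M.mulVec (Vval γ P r πk)) s₀ := by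
        rw [← mul_sub, hsub]
      linarith
    have hΔ0 : 0 ≤ Δ s₀ := by
      have hγΔ : γ * Δ s₀ ≤ Δ s₀ :=
        le_trans (mul_le_mul_of_nonneg_left hge hγ0) hstep
      nlinarith
    intro s
    have := le_trans hΔ0 (hmin s (Finset.mem_univ _))
    simp only [hΔdef] at this
    linarith
  exact Finset.sum_le_sum fun s _ => mul_le_mul_of_nonneg_left (hΔ s) (hρ s)
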